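/- There is a constant K ≥ 1, depending only on A and p, such that for any two p-dimensional subspaces A₁ and A₂ of A one has K⁻¹·α(⋀^p A₁, ⋀^p A₂) ≤ α^Haus(A₁, A₂) ≤ K·α(⋀^p A₁, ⋀^p A₂), where ⋀^p A₁ and ⋀^p A₂ are the corresponding lines in the exterior power ⋀^p A. -/

import Mathlib

/-!
Let `P` be the orthogonal projection onto `A₂`, `f : A₁ → A₂` its restriction to `A₁`, and
`c` the `normDet` of `f`, the product of its singular values (the cosines of the principal
angles between `A₁` and `A₂`). For orthonormal bases `e` of `A₁` and `v` of `A₂`,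
`c = |det ⟪eᵢ, vⱼ⟫|`, which is the cosine of the angle between the lines `⋀^p A₁` and `⋀^p A₂`;
the line through `x ∈ A₁` makes the angle `arccos (‖P x‖ / ‖x‖)` with `A₂`.

All singular values lie in `[0, 1]`, so `c` is at most the smallest of them and `‖P x‖ ≥ c ‖x‖`:
the Hausdorff distance `h` is at most `arccos c` (`f` and its adjoint have the same `normDet`).
Conversely `‖P x‖ ≥ cos h · ‖x‖` on `A₁`, so `c ≥ cos h ^ p`; Bernoulli's inequality gives
`sin (arccos c) ≤ √p sin h`, and Jordan's inequality `arccos c ≤ (π / 2) sin (arccos c)`.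
-/

open scoped RealInnerProductSpace

noncomputable section

variable {A : Type*} [NormedAddCommGroup A] [InnerProductSpace ℝ A] [FiniteDimensional ℝ A]

/-- The angle `α(x, y) = arccos (|⟨x,y⟫| / (‖x‖ ‖y‖))` between the lines spanned by `x` and
`y`. -/
noncomputable def lineAngle (x y : A) : ℝ :=
  Real.arccos (|⟪x, y⟫| / (‖x‖ * ‖y‖))

/-- The Hausdorff distance, with respect to the angle metric, between the set of lines
contained in `A₁` and the set of lines contained in `A₂`. -/
noncomputable def hausAngle (A₁ A₂ : Submodule ℝ A) : ℝ :=
  max (⨆ x : {x : A // x ∈ A₁ ∧ x ≠ 0}, ⨅ y : {y : A // y ∈ A₂ ∧ y ≠ 0}, lineAngle x.1 y.1)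
      (⨆ y : {y : A // y ∈ A₂ ∧ y ≠ 0}, ⨅ x : {x : A // x ∈ A₁ ∧ x ≠ 0}, lineAngle y.1 x.1)

/-- The image of `⋀^n U` in `⋀^n A` under the map induced by the inclusion `U ⊆ A`,
i.e. the span of the decomposable elements `v₁ ∧ ⋯ ∧ vₙ` with all `vᵢ ∈ U`. -/
noncomputable def subWedge (U : Submodule ℝ A) (n : ℕ) : Submodule ℝ (⋀[ℝ]^n A) :=
  Submodule.span ℝ {x : ⋀[ℝ]^n A | ∃ v : Fin n → A, (∀ i, v i ∈ U) ∧
    (x : ExteriorAlgebra ℝ A) = ExteriorAlgebra.ιMulti ℝ n v}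

/-- The angle between the lines spanned by `x` and `y`, with respect to the inner product
given by a bilinear form `B`. -/
noncomputable def formAngle {F : Type*} [AddCommGroup F] [Module ℝ F]
    (B : F →ₗ[ℝ] F →ₗ[ℝ] ℝ) (x y : F) : ℝ :=
  Real.arccos (|B x y| / (Real.sqrt (B x x) * Real.sqrt (B y y)))

open Module Real

theorem AlternatingMap.eq_basis_det_smulRight {R M N ι : Type*} [CommRing R] [AddCommGroup M]
    [Module R M] [AddCommGroup N] [Module R N] [Fintype ι] [DecidableEq ι] (e : Basis ι R M)
    (f : M [⋀^ι]→ₗ[R] N) : f = e.det.smulRight (f e) := by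
  refine Basis.ext_alternating e fun i h => ?_
  let σ : Equiv.Perm ι := Equiv.ofBijective i (Finite.injective_iff_bijective.1 h)
  change f (e ∘ σ) = e.det.smulRight (f e) (e ∘ σ)
  simp [AlternatingMap.map_perm, Basis.det_self]

namespace LinearMap

variable {E F : Type*} [NormedAddCommGroup E] [InnerProductSpace ℝ E] [FiniteDimensional ℝ E]
  [NormedAddCommGroup F] [InnerProductSpace ℝ F] [FiniteDimensional ℝ F]

theorem inner_adjoint_comp_self_apply_self (f : E →ₗ[ℝ] F) (x : E) :
    ⟪(adjoint f ∘ₗ f) x, x⟫ = ‖f x‖ ^ 2 := by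
  rw [comp_apply, adjoint_inner_left, real_inner_self_eq_norm_sq]

section Eigen

variable (f : E →ₗ[ℝ] F) {n : ℕ} (hn : finrank ℝ E = n)

theorem eigenvalues_adjoint_comp_self (i : Fin n) :
    f.isSymmetric_adjoint_comp_self.eigenvalues hn i =
      ‖f (f.isSymmetric_adjoint_comp_self.eigenvectorBasis hn i)‖ ^ 2 := by
  rw [← inner_adjoint_comp_self_apply_self, IsSymmetric.apply_eigenvectorBasis,
    real_inner_smul_left, real_inner_self_eq_norm_sq,
    (f.isSymmetric_adjoint_comp_self.eigenvectorBasis hn).norm_eq_one]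
  simp

theorem normDet_sq_eq_prod_eigenvalues :
    f.normDet ^ 2 = ∏ i, f.isSymmetric_adjoint_comp_self.eigenvalues hn i := by
  simpa [f.isSymmetric_adjoint_comp_self.det_eq_prod_eigenvalues hn] using f.normDet_sq

theorem norm_apply_sq_eq_sum_eigenvalues (x : E) :
    ‖f x‖ ^ 2 = ∑ i, f.isSymmetric_adjoint_comp_self.eigenvalues hn i *
      ⟪f.isSymmetric_adjoint_comp_self.eigenvectorBasis hn i, x⟫ ^ 2 := by
  rw [← inner_adjoint_comp_self_apply_self,
    ← (f.isSymmetric_adjoint_comp_self.eigenvectorBasis hn).sum_inner_mul_inner]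
  refine Finset.sum_congr rfl fun i _ => ?_
  rw [f.isSymmetric_adjoint_comp_self, IsSymmetric.apply_eigenvectorBasis, real_inner_smul_right,
    real_inner_comm x]
  simp only [RCLike.ofReal_real_eq_id, id_eq]
  ring

end Eigen

theorem normDet_mul_norm_le_norm_apply (f : E →ₗ[ℝ] F) (hf : ∀ y, ‖f y‖ ≤ ‖y‖) (x : E) :
    f.normDet * ‖x‖ ≤ ‖f x‖ := by
  set μ := f.isSymmetric_adjoint_comp_self.eigenvalues rfl
  set b := f.isSymmetric_adjoint_comp_self.eigenvectorBasis rfl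
  have hμ : ∀ i, μ i = ‖f (b i)‖ ^ 2 := f.eigenvalues_adjoint_comp_self rfl
  have hμ0 : ∀ i, 0 ≤ μ i := fun i => (hμ i).symm ▸ sq_nonneg _
  have hμ1 : ∀ i, μ i ≤ 1 := fun i => by
    rw [hμ i, ← one_pow 2, ← b.norm_eq_one i]
    exact pow_le_pow_left₀ (norm_nonneg _) (hf _) 2
  have hprod : ∀ i, ∏ j, μ j ≤ μ i := fun i => by
    rw [← Finset.mul_prod_erase _ _ (Finset.mem_univ i)]
    exact mul_le_of_le_one_right (hμ0 i)
      (Finset.prod_le_one (fun j _ => hμ0 j) fun j _ => hμ1 j)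
  refine pow_le_pow_iff_left₀ (mul_nonneg f.normDet_nonneg (norm_nonneg x)) (norm_nonneg _)
    two_ne_zero |>.mp ?_
  calc (f.normDet * ‖x‖) ^ 2 = ∑ i, (∏ j, μ j) * ⟪b i, x⟫ ^ 2 := by
        rw [mul_pow, normDet_sq_eq_prod_eigenvalues f rfl, ← b.sum_sq_inner_right, Finset.mul_sum]
    _ ≤ ∑ i, μ i * ⟪b i, x⟫ ^ 2 :=
        Finset.sum_le_sum fun i _ => mul_le_mul_of_nonneg_right (hprod i) (sq_nonneg _)
    _ = ‖f x‖ ^ 2 := (f.norm_apply_sq_eq_sum_eigenvalues rfl x).symm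

theorem pow_finrank_le_normDet (f : E →ₗ[ℝ] F) {c : ℝ} (hc : 0 ≤ c)
    (hf : ∀ x, c * ‖x‖ ≤ ‖f x‖) : c ^ finrank ℝ E ≤ f.normDet := by
  set b := f.isSymmetric_adjoint_comp_self.eigenvectorBasis rfl
  refine pow_le_pow_iff_left₀ (pow_nonneg hc _) f.normDet_nonneg two_ne_zero |>.mp ?_
  calc (c ^ finrank ℝ E) ^ 2 = ∏ i, (c * ‖b i‖) ^ 2 := by
        simp [b.norm_eq_one, ← pow_mul, mul_comm]
    _ ≤ ∏ i, ‖f (b i)‖ ^ 2 :=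
        Finset.prod_le_prod (fun i _ => sq_nonneg _)
          fun i _ => pow_le_pow_left₀ (by positivity) (hf _) 2
    _ = f.normDet ^ 2 := by
        rw [normDet_sq_eq_prod_eigenvalues f rfl]
        exact Finset.prod_congr rfl fun i _ => (f.eigenvalues_adjoint_comp_self rfl i).symm

theorem normDet_adjoint (f : E →ₗ[ℝ] F) (h : finrank ℝ E = finrank ℝ F) :
    (adjoint f).normDet = f.normDet := by
  let bE := stdOrthonormalBasis ℝ E
  let bF := (stdOrthonormalBasis ℝ F).reindex (finCongr h.symm)
  rw [normDet_eq_norm_det_toMatrix _ bF bE, toMatrix_adjoint, Matrix.det_conjTranspose,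
    normDet_eq_norm_det_toMatrix f bE bF]
  simp

end LinearMap

namespace Real

theorem arccos_le_of_cos_pow_le {θ c : ℝ} {n : ℕ} (hθ0 : 0 ≤ θ) (hθ : θ ≤ π / 2)
    (hc : cos θ ^ n ≤ c) : arccos c ≤ π / 2 * √n * θ := by
  have hcos : 0 ≤ cos θ := cos_nonneg_of_mem_Icc ⟨by linarith [pi_pos], hθ⟩
  have hc0 : 0 ≤ c := (pow_nonneg hcos n).trans hc
  have hsin : sin (arccos c) ≤ √n * sin θ := by
    have hbernoulli : 1 + n * -sin θ ^ 2 ≤ (1 + -sin θ ^ 2) ^ n :=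
      one_add_mul_le_pow (by nlinarith [sin_sq_le_one θ]) n
    have hc2 : (cos θ ^ n) ^ 2 ≤ c ^ 2 := pow_le_pow_left₀ (pow_nonneg hcos n) hc 2
    rw [← pow_mul, mul_comm n, pow_mul, cos_sq', sub_eq_add_neg] at hc2
    rw [sin_arccos, ← sqrt_sq (sin_nonneg_of_nonneg_of_le_pi hθ0 (by linarith [pi_pos])),
      ← sqrt_mul n.cast_nonneg]
    exact sqrt_le_sqrt (by linarith)
  have hjordan : arccos c ≤ π / 2 * sin (arccos c) := by
    have := mul_le_sin (arccos_nonneg c) (arccos_le_pi_div_two.2 hc0)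
    rw [div_mul_eq_mul_div, div_le_iff₀ pi_pos] at this
    linarith
  calc arccos c ≤ π / 2 * (√n * θ) :=
        hjordan.trans (by gcongr; exact hsin.trans (by gcongr; exact sin_le hθ0))
    _ = π / 2 * √n * θ := by ring

end Real

section Angles

variable {E : Type*} [NormedAddCommGroup E] [InnerProductSpace ℝ E]

theorem bddBelow_range_lineAngle {ι : Type*} (x : E) (y : ι → E) :
    BddBelow (Set.range fun i => lineAngle x (y i)) :=
  ⟨0, by rintro _ ⟨i, rfl⟩; exact arccos_nonneg _⟩

theorem lineAngle_le_pi_div_two (x y : E) : lineAngle x y ≤ π / 2 :=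
  arccos_le_pi_div_two.2 (by positivity)

theorem iInf_lineAngle_le_pi_div_two (x : E) (V : Submodule ℝ E) :
    ⨅ y : {y : E // y ∈ V ∧ y ≠ 0}, lineAngle x y.1 ≤ π / 2 := by
  rcases isEmpty_or_nonempty {y : E // y ∈ V ∧ y ≠ 0} with h | h
  · rw [Real.iInf_of_isEmpty]
    positivity
  · exact (ciInf_le (bddBelow_range_lineAngle x Subtype.val) h.some).trans
      (lineAngle_le_pi_div_two _ _)

theorem hausAngle_nonneg (U V : Submodule ℝ E) : 0 ≤ hausAngle U V :=
  (Real.iSup_nonneg fun _ => Real.iInf_nonneg fun _ => arccos_nonneg _).trans (le_max_left _ _)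

theorem hausAngle_le_pi_div_two (U V : Submodule ℝ E) : hausAngle U V ≤ π / 2 :=
  max_le (Real.iSup_le (fun x => iInf_lineAngle_le_pi_div_two x.1 V) (by positivity))
    (Real.iSup_le (fun y => iInf_lineAngle_le_pi_div_two y.1 U) (by positivity))

theorem iInf_lineAngle_le_hausAngle {U : Submodule ℝ E} (V : Submodule ℝ E) {x : E} (hx : x ∈ U)
    (hx0 : x ≠ 0) : ⨅ y : {y : E // y ∈ V ∧ y ≠ 0}, lineAngle x y.1 ≤ hausAngle U V :=
  (le_ciSup ⟨π / 2, by rintro _ ⟨z, rfl⟩; exact iInf_lineAngle_le_pi_div_two z.1 V⟩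
    (⟨x, hx, hx0⟩ : {x : E // x ∈ U ∧ x ≠ 0})).trans (le_max_left _ _)

variable (V : Submodule ℝ E) [V.HasOrthogonalProjection]

theorem lineAngle_starProjection (x : E) :
    lineAngle x (V.starProjection x) = arccos (‖V.starProjection x‖ / ‖x‖) := by
  have hinner : ⟪x, V.starProjection x⟫ = ‖V.starProjection x‖ ^ 2 := by
    rw [real_inner_comm]
    simpa using V.re_inner_starProjection_eq_normSq x
  rw [lineAngle, hinner, abs_of_nonneg (sq_nonneg _)]
  rcases eq_or_ne ‖V.starProjection x‖ 0 with h | h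
  · simp [h]
  · congr 1
    field_simp

theorem arccos_le_lineAngle (x : E) {y : E} (hy : y ∈ V) :
    arccos (‖V.starProjection x‖ / ‖x‖) ≤ lineAngle x y := by
  have hinner : |⟪x, y⟫| ≤ ‖V.starProjection x‖ * ‖y‖ := by
    rw [← V.inner_orthogonalProjectionOnto_eq_of_mem_right ⟨y, hy⟩ x]
    exact abs_real_inner_le_norm _ _
  refine arccos_le_arccos ?_
  rcases eq_or_ne ‖y‖ 0 with hy0 | hy0
  · simp only [hy0, mul_zero, div_zero]
    positivity
  · rw [mul_comm, ← div_div]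
    exact div_le_div_of_nonneg_right ((div_le_iff₀ (by positivity)).2 hinner) (norm_nonneg _)

theorem iInf_lineAngle_le_arccos (x : E) :
    ⨅ y : {y : E // y ∈ V ∧ y ≠ 0}, lineAngle x y.1 ≤ arccos (‖V.starProjection x‖ / ‖x‖) := by
  by_cases hP : V.starProjection x = 0
  · rw [hP, norm_zero, zero_div, arccos_zero]
    exact iInf_lineAngle_le_pi_div_two x V
  · rw [← lineAngle_starProjection V x]
    exact ciInf_le (bddBelow_range_lineAngle x Subtype.val)
      (⟨V.starProjection x, V.starProjection_apply_mem x, hP⟩ : {y : E // y ∈ V ∧ y ≠ 0})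

end Angles

namespace Submodule

variable {E : Type*} [NormedAddCommGroup E] [InnerProductSpace ℝ E]

def orthogonalProjectionFrom (U V : Submodule ℝ E) [V.HasOrthogonalProjection] : U →ₗ[ℝ] V :=
  V.orthogonalProjectionOnto.toLinearMap ∘ₗ U.subtype

variable (U V : Submodule ℝ E) [FiniteDimensional ℝ U] [FiniteDimensional ℝ V]

theorem adjoint_orthogonalProjectionFrom :
    LinearMap.adjoint (U.orthogonalProjectionFrom V) = V.orthogonalProjectionFrom U :=
  ((LinearMap.eq_adjoint_iff _ _).2 fun y x => by simp [orthogonalProjectionFrom]).symm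

theorem normDet_orthogonalProjectionFrom_comm (h : finrank ℝ U = finrank ℝ V) :
    (V.orthogonalProjectionFrom U).normDet = (U.orthogonalProjectionFrom V).normDet := by
  rw [← adjoint_orthogonalProjectionFrom, LinearMap.normDet_adjoint _ h]

theorem normDet_orthogonalProjectionFrom_mul_norm_le {x : E} (hx : x ∈ U) :
    (U.orthogonalProjectionFrom V).normDet * ‖x‖ ≤ ‖V.starProjection x‖ :=
  (U.orthogonalProjectionFrom V).normDet_mul_norm_le_norm_apply
    (fun y => V.norm_orthogonalProjectionOnto_apply_le (y : E)) ⟨x, hx⟩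

end Submodule

section HausAngle

variable {E : Type*} [NormedAddCommGroup E] [InnerProductSpace ℝ E] {U V : Submodule ℝ E}

theorem iSup_iInf_lineAngle_le_arccos [V.HasOrthogonalProjection] {c : ℝ}
    (h : ∀ x ∈ U, c * ‖x‖ ≤ ‖V.starProjection x‖) :
    ⨆ x : {x : E // x ∈ U ∧ x ≠ 0}, ⨅ y : {y : E // y ∈ V ∧ y ≠ 0}, lineAngle x.1 y.1 ≤
      arccos c :=
  Real.iSup_le (fun x => (iInf_lineAngle_le_arccos V x.1).trans <| arccos_le_arccos <|
    (le_div_iff₀ (norm_pos_iff.2 x.2.2)).2 (h x.1 x.2.1)) (arccos_nonneg c)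

theorem cos_hausAngle_mul_norm_le [FiniteDimensional ℝ U] [V.HasOrthogonalProjection]
    (h : finrank ℝ U ≤ finrank ℝ V) {x : E} (hx : x ∈ U) :
    cos (hausAngle U V) * ‖x‖ ≤ ‖V.starProjection x‖ := by
  rcases eq_or_ne x 0 with rfl | hx0
  · simp
  -- without a nonzero vector in `V` the infimum over `V` would be the junk value `0`
  have : Nontrivial V := Module.nontrivial_of_finrank_pos <| h.trans_lt' <|
    finrank_pos_iff_exists_ne_zero.2 ⟨⟨x, hx⟩, by simpa using hx0⟩
  obtain ⟨y, hy⟩ := exists_ne (0 : V)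
  have : Nonempty {y : E // y ∈ V ∧ y ≠ 0} := ⟨⟨y, y.2, by simpa using hy⟩⟩
  set r := ‖V.starProjection x‖ / ‖x‖
  have hangle : arccos r ≤ hausAngle U V :=
    (le_ciInf fun y => arccos_le_lineAngle V x y.2.1).trans (iInf_lineAngle_le_hausAngle V hx hx0)
  have hx' : 0 < ‖x‖ := norm_pos_iff.2 hx0
  calc cos (hausAngle U V) * ‖x‖ ≤ cos (arccos r) * ‖x‖ := by
        gcongr
        exact cos_le_cos_of_nonneg_of_le_pi (arccos_nonneg r)
          ((hausAngle_le_pi_div_two U V).trans (by linarith [pi_pos])) hangle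
    _ = ‖V.starProjection x‖ := by
        rw [cos_arccos (by linarith [show 0 ≤ r by positivity])
          ((div_le_one hx').2 (V.norm_starProjection_apply_le x))]
        field_simp

variable [FiniteDimensional ℝ U] [FiniteDimensional ℝ V]

theorem hausAngle_le_arccos_normDet (h : finrank ℝ U = finrank ℝ V) :
    hausAngle U V ≤ arccos (U.orthogonalProjectionFrom V).normDet :=
  max_le (iSup_iInf_lineAngle_le_arccos fun _ => U.normDet_orthogonalProjectionFrom_mul_norm_le V)
    (iSup_iInf_lineAngle_le_arccos fun _ => U.normDet_orthogonalProjectionFrom_comm V h ▸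
      V.normDet_orthogonalProjectionFrom_mul_norm_le U)

theorem arccos_normDet_le_mul_hausAngle (h : finrank ℝ U ≤ finrank ℝ V) :
    arccos (U.orthogonalProjectionFrom V).normDet ≤ π / 2 * √(finrank ℝ U) * hausAngle U V :=
  arccos_le_of_cos_pow_le (hausAngle_nonneg U V) (hausAngle_le_pi_div_two U V) <|
    (U.orthogonalProjectionFrom V).pow_finrank_le_normDet
      (cos_nonneg_of_mem_Icc ⟨by linarith [pi_pos, hausAngle_nonneg U V],
        hausAngle_le_pi_div_two U V⟩)
      fun x => cos_hausAngle_mul_norm_le h x.2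

end HausAngle

theorem formAngle_smul_smul {F : Type*} [AddCommGroup F] [Module ℝ F] (B : F →ₗ[ℝ] F →ₗ[ℝ] ℝ)
    {a b : ℝ} (ha : a ≠ 0) (hb : b ≠ 0) (x y : F) :
    formAngle B (a • x) (b • y) = formAngle B x y := by
  have hsqrt : ∀ (c : ℝ) (z : F), √(B (c • z) (c • z)) = |c| * √(B z z) := fun c z => by
    rw [map_smul, LinearMap.map_smul₂, smul_eq_mul, smul_eq_mul, ← mul_assoc, ← sq,
      sqrt_mul (sq_nonneg c), sqrt_sq_eq_abs]
  rw [formAngle, formAngle, hsqrt, hsqrt, map_smul, LinearMap.map_smul₂, smul_eq_mul,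
    smul_eq_mul, abs_mul, abs_mul]
  have ha' : |a| ≠ 0 := abs_ne_zero.2 ha
  have hb' : |b| ≠ 0 := abs_ne_zero.2 hb
  congr 1
  field_simp

section ExteriorPower

variable {E : Type*} [NormedAddCommGroup E] [InnerProductSpace ℝ E]

theorem subWedge_le_span_ιMulti {U : Submodule ℝ E} {n : ℕ} (e : Basis (Fin n) ℝ U) :
    subWedge U n ≤ ℝ ∙ exteriorPower.ιMulti ℝ n (U.subtype ∘ e) := by
  rw [subWedge, Submodule.span_le]
  rintro x ⟨v, hvU, hx⟩
  let w : Fin n → U := fun i => ⟨v i, hvU i⟩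
  have hxw : x = exteriorPower.ιMulti ℝ n (U.subtype ∘ w) := Subtype.ext hx
  have hdet := DFunLike.congr_fun (AlternatingMap.eq_basis_det_smulRight e
    ((exteriorPower.ιMulti ℝ n).compLinearMap U.subtype)) w
  rw [SetLike.mem_coe, Submodule.mem_span_singleton, hxw]
  exact ⟨e.det w, hdet.symm⟩

theorem formAngle_eq_arccos_normDet {U V : Submodule ℝ E} [FiniteDimensional ℝ U]
    [FiniteDimensional ℝ V] {n : ℕ} (hU : finrank ℝ U = n) (hV : finrank ℝ V = n)
    (B : (⋀[ℝ]^n E) →ₗ[ℝ] (⋀[ℝ]^n E) →ₗ[ℝ] ℝ)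
    (hB : ∀ (x y : ⋀[ℝ]^n E) (u v : Fin n → E),
      (x : ExteriorAlgebra ℝ E) = ExteriorAlgebra.ιMulti ℝ n u →
      (y : ExteriorAlgebra ℝ E) = ExteriorAlgebra.ιMulti ℝ n v →
      B x y = Matrix.det (Matrix.of fun i j => (⟪u i, v j⟫ : ℝ)))
    {ω₁ ω₂ : ⋀[ℝ]^n E} (hω₁ : ω₁ ∈ subWedge U n) (hω₁0 : ω₁ ≠ 0) (hω₂ : ω₂ ∈ subWedge V n)
    (hω₂0 : ω₂ ≠ 0) :
    formAngle B ω₁ ω₂ = arccos (U.orthogonalProjectionFrom V).normDet := by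
  let e := (stdOrthonormalBasis ℝ U).reindex (finCongr hU)
  let v := (stdOrthonormalBasis ℝ V).reindex (finCongr hV)
  obtain ⟨a, rfl⟩ := Submodule.mem_span_singleton.1 (subWedge_le_span_ιMulti e.toBasis hω₁)
  obtain ⟨b, rfl⟩ := Submodule.mem_span_singleton.1 (subWedge_le_span_ιMulti v.toBasis hω₂)
  have hself : ∀ {W : Submodule ℝ E} (w : OrthonormalBasis (Fin n) ℝ W),
      B (exteriorPower.ιMulti ℝ n (W.subtype ∘ w.toBasis))
        (exteriorPower.ιMulti ℝ n (W.subtype ∘ w.toBasis)) = 1 := fun w => by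
    rw [hB _ _ _ _ rfl rfl, ← Matrix.det_one (n := Fin n) (R := ℝ)]
    congr
    ext i j
    simpa [Matrix.one_apply] using orthonormal_iff_ite.1 w.orthonormal i j
  have hcross : |B (exteriorPower.ιMulti ℝ n (U.subtype ∘ e.toBasis))
      (exteriorPower.ιMulti ℝ n (V.subtype ∘ v.toBasis))| =
        (U.orthogonalProjectionFrom V).normDet := by
    rw [hB _ _ _ _ rfl rfl, LinearMap.normDet_eq_norm_det_toMatrix _ e v, Real.norm_eq_abs,
      ← Matrix.det_transpose]
    congr
    ext i j
    simp [Submodule.orthogonalProjectionFrom, OrthonormalBasis.repr_apply_apply, real_inner_comm]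
  rw [formAngle_smul_smul B (left_ne_zero_of_smul hω₁0) (left_ne_zero_of_smul hω₂0), formAngle,
    hself, hself, hcross, sqrt_one, mul_one, div_one]

end ExteriorPower

theorem hausdorff_angle_comparison (p : ℕ)
    -- `B` is the canonical inner product of `⋀^p A`, determined by
    -- `⟨u₁∧⋯∧u_p, v₁∧⋯∧v_p⟩ = det (⟨uᵢ, vⱼ⟩)ᵢⱼ`
    (B : (⋀[ℝ]^p A) →ₗ[ℝ] (⋀[ℝ]^p A) →ₗ[ℝ] ℝ)
    (hB : ∀ (x y : ⋀[ℝ]^p A) (u v : Fin p → A),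
      (x : ExteriorAlgebra ℝ A) = ExteriorAlgebra.ιMulti ℝ p u →
      (y : ExteriorAlgebra ℝ A) = ExteriorAlgebra.ιMulti ℝ p v →
      B x y = Matrix.det (Matrix.of fun i j => (⟪u i, v j⟫ : ℝ))) :
    ∃ K : ℝ, 1 ≤ K ∧
      ∀ A₁ A₂ : Submodule ℝ A, Module.finrank ℝ A₁ = p → Module.finrank ℝ A₂ = p →
        ∀ ω₁ ∈ subWedge A₁ p, ω₁ ≠ 0 → ∀ ω₂ ∈ subWedge A₂ p, ω₂ ≠ 0 →
          K⁻¹ * formAngle B ω₁ ω₂ ≤ hausAngle A₁ A₂ ∧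
          hausAngle A₁ A₂ ≤ K * formAngle B ω₁ ω₂ := by
  have hK : 1 ≤ 1 + π / 2 * √p := le_add_of_nonneg_right (by positivity)
  refine ⟨1 + π / 2 * √p, hK, fun A₁ A₂ h₁ h₂ ω₁ hω₁ hω₁0 ω₂ hω₂ hω₂0 => ?_⟩
  have hdim : finrank ℝ A₁ = finrank ℝ A₂ := h₁.trans h₂.symm
  have hlower := arccos_normDet_le_mul_hausAngle hdim.le
  rw [h₁] at hlower
  rw [formAngle_eq_arccos_normDet h₁ h₂ B hB hω₁ hω₁0 hω₂ hω₂0, inv_mul_le_iff₀ (by positivity)]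
  constructor
  · nlinarith [hausAngle_nonneg A₁ A₂]
  · exact (hausAngle_le_arccos_normDet hdim).trans (le_mul_of_one_le_left (arccos_nonneg _) hK)

end
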